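/- (Refined Jensen-based double-sum inequality, Corollary) Let R ∈ ℝ^{n×n} be symmetric positive definite, a ≤ b integers, ℓ = b - a + 1, and u : ℤ[a,b] → ℝ^n. With υ₂ = ∑_{k=a}^{b} ∑_{s=a}^{k} u_s and ζ₄ = υ₂ - (3/(ℓ+2))υ₃ (υ₃ the triple sum), one has ∑_{k=a}^{b} ∑_{s=a}^{k} u_s^T R u_s ≥ (2/(ℓ(ℓ+1)))(υ₂^T R υ₂ + 8 ζ₄^T R ζ₄). -/

import Mathlib

/-!
Swapping the order of summation turns the double sum into the weighted sum
`∑ₛ wₛ uₛᵀ R uₛ` with `wₛ = b - s + 1 ∈ {1, …, ℓ}`, and likewise `υ₂ = ∑ wₛ uₛ` and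
`ζ₄ = ∑ wₛ p(wₛ) uₛ` for an affine `p` with `∑ wₛ p(wₛ) = 0`. Expanding
`0 ≤ ∑ wₛ (uₛ - α - p(wₛ) β)ᵀ R (uₛ - α - p(wₛ) β)` with `α = υ₂ / ∑ wₛ` and `β = c ζ₄` gives
`υ₂ᵀRυ₂ / ∑ wₛ + c ζ₄ᵀRζ₄ ≤ ∑ wₛ uₛᵀRuₛ` whenever `c ∑ wₛ p(wₛ)² ≤ 1`. The moments are
`∑ wₛ = ℓ(ℓ+1)/2` and `∑ wₛ p(wₛ)² = ℓ(ℓ+1)(ℓ-1)/(16(ℓ+2)) ≤ ℓ(ℓ+1)/16`, so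
`c = 16/(ℓ(ℓ+1))` is admissible.
-/

open Finset Matrix

lemma sum_range_cubic_cast_add_one (c₁ c₂ c₃ : ℝ) (L : ℕ) :
    ∑ j ∈ range L, (c₁ * ((j : ℝ) + 1) + c₂ * ((j : ℝ) + 1) ^ 2 + c₃ * ((j : ℝ) + 1) ^ 3) =
      c₁ * (L * (L + 1) / 2) + c₂ * (L * (L + 1) * (2 * L + 1) / 6) +
        c₃ * ((L * (L + 1)) ^ 2 / 4) := by
  induction L with
  | zero => simp
  | succ m ih => rw [sum_range_succ, ih]; push_cast; ring

lemma sum_range_cast_add_one (L : ℕ) :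
    ∑ j ∈ range L, ((j : ℝ) + 1) = (L : ℝ) * (L + 1) / 2 := by
  simpa using sum_range_cubic_cast_add_one 1 0 0 L

lemma Int.cast_toNat_of_nonneg {R : Type*} [AddGroupWithOne R] {x : ℤ} (hx : 0 ≤ x) :
    ((x.toNat : ℕ) : R) = x := by
  rw [← Int.cast_natCast, Int.toNat_of_nonneg hx]

lemma Int.cast_toNat_sub_add_one {a b : ℤ} (hab : a ≤ b + 1) :
    (((b - a + 1).toNat : ℕ) : ℝ) = b - a + 1 := by
  rw [Int.cast_toNat_of_nonneg (by omega)]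
  push_cast
  rfl

lemma sum_Icc_eq_sum_range {M : Type*} [AddCommMonoid M] (a b : ℤ) (g : ℝ → M) :
    ∑ s ∈ Icc a b, g ((b : ℝ) - s + 1) = ∑ j ∈ range (b - a + 1).toNat, g (j + 1) := by
  refine sum_nbij' (fun s => (b - s).toNat) (fun j => b - j) ?_ ?_ ?_ ?_ ?_ <;>
    intro x hx <;> simp only [mem_Icc, mem_range] at *
  any_goals omega
  rw [Int.cast_toNat_of_nonneg (by omega)]
  congr 1
  push_cast
  ring

lemma sum_Icc_sub_add_one {a b : ℤ} (hab : a ≤ b + 1) {ℓ : ℝ} (hℓ : ℓ = b - a + 1) :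
    ∑ s ∈ Icc a b, ((b : ℝ) - s + 1) = ℓ * (ℓ + 1) / 2 := by
  obtain rfl : ℓ = (((b - a + 1).toNat : ℕ) : ℝ) := hℓ.trans (Int.cast_toNat_sub_add_one hab).symm
  exact (sum_Icc_eq_sum_range a b fun x => x).trans (sum_range_cast_add_one _)

lemma sum_Icc_sum_Icc_eq_sum_smul {M : Type*} [AddCommMonoid M] [Module ℝ M] (a b : ℤ)
    (f : ℤ → M) :
    ∑ k ∈ Icc a b, ∑ s ∈ Icc a k, f s = ∑ s ∈ Icc a b, ((b : ℝ) - s + 1) • f s := by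
  rw [sum_comm' (t' := Icc a b) (s' := fun s => Icc s b) fun k s => by simp only [mem_Icc]; omega]
  refine sum_congr rfl fun s hs => ?_
  rw [sum_const, Int.card_Icc, ← Nat.cast_smul_eq_nsmul ℝ,
    Int.cast_toNat_of_nonneg (by simp only [mem_Icc] at hs; omega)]
  congr 1
  push_cast
  ring

lemma sum_Icc_sum_Icc_sum_Icc_eq_sum_smul {M : Type*} [AddCommMonoid M] [Module ℝ M] (a b : ℤ)
    (f : ℤ → M) :
    ∑ k ∈ Icc a b, ∑ s ∈ Icc a k, ∑ i ∈ Icc a s, f i =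
      ∑ i ∈ Icc a b, (((b : ℝ) - i + 1) * ((b : ℝ) - i + 2) / 2) • f i := by
  rw [sum_Icc_sum_Icc_eq_sum_smul]
  simp_rw [smul_sum]
  rw [sum_comm' (t' := Icc a b) (s' := fun i => Icc i b) fun s i => by simp only [mem_Icc]; omega]
  refine sum_congr rfl fun i hi => ?_
  rw [← sum_smul, sum_Icc_sub_add_one (by simp only [mem_Icc] at hi; omega) rfl]
  congr 1
  ring

/-- Up to scaling, the degree-one orthogonal polynomial for the weights `x` on `{1, …, L}`. -/
noncomputable def firstOrthPoly (L x : ℝ) : ℝ := 1 - 3 / (L + 2) * ((x + 1) / 2)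

lemma sum_range_mul_firstOrthPoly (L : ℕ) :
    ∑ j ∈ range L, ((j : ℝ) + 1) * firstOrthPoly L (j + 1) = 0 := by
  have hL : (L : ℝ) + 2 ≠ 0 := by positivity
  have expand : ∀ x : ℝ, x * firstOrthPoly L x =
      (1 - 3 / (2 * (L + 2))) * x + (- 3 / (2 * (L + 2))) * x ^ 2 + 0 * x ^ 3 := by
    intro x; unfold firstOrthPoly; field_simp; ring
  rw [sum_congr rfl fun j _ => expand _, sum_range_cubic_cast_add_one]
  field_simp
  ring

lemma sum_range_mul_firstOrthPoly_sq (L : ℕ) :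
    ∑ j ∈ range L, ((j : ℝ) + 1) * firstOrthPoly L (j + 1) ^ 2 =
      (L : ℝ) * (L + 1) * (L - 1) / (16 * (L + 2)) := by
  have hL : (L : ℝ) + 2 ≠ 0 := by positivity
  have expand : ∀ x : ℝ, x * firstOrthPoly L x ^ 2 =
      (1 - 3 / (L + 2) + 9 / (4 * (L + 2) ^ 2)) * x + (- 3 / (L + 2) + 9 / (2 * (L + 2) ^ 2)) * x ^ 2
        + 9 / (4 * (L + 2) ^ 2) * x ^ 3 := by
    intro x; unfold firstOrthPoly; field_simp; ring
  rw [sum_congr rfl fun j _ => expand _, sum_range_cubic_cast_add_one]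
  field_simp
  ring

lemma sum_Icc_mul_firstOrthPoly {a b : ℤ} (hab : a ≤ b + 1) {ℓ : ℝ} (hℓ : ℓ = b - a + 1) :
    ∑ s ∈ Icc a b, ((b : ℝ) - s + 1) * firstOrthPoly ℓ ((b : ℝ) - s + 1) = 0 := by
  obtain rfl : ℓ = (((b - a + 1).toNat : ℕ) : ℝ) := hℓ.trans (Int.cast_toNat_sub_add_one hab).symm
  exact (sum_Icc_eq_sum_range a b fun x => x * firstOrthPoly _ x).trans
    (sum_range_mul_firstOrthPoly _)

lemma sum_Icc_mul_firstOrthPoly_sq {a b : ℤ} (hab : a ≤ b + 1) {ℓ : ℝ} (hℓ : ℓ = b - a + 1) :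
    ∑ s ∈ Icc a b, ((b : ℝ) - s + 1) * firstOrthPoly ℓ ((b : ℝ) - s + 1) ^ 2 =
      ℓ * (ℓ + 1) * (ℓ - 1) / (16 * (ℓ + 2)) := by
  obtain rfl : ℓ = (((b - a + 1).toNat : ℕ) : ℝ) := hℓ.trans (Int.cast_toNat_sub_add_one hab).symm
  exact (sum_Icc_eq_sum_range a b fun x => x * firstOrthPoly _ x ^ 2).trans
    (sum_range_mul_firstOrthPoly_sq _)

lemma sum_Icc_sum_Icc_sub_smul_triple_eq_sum_smul {M : Type*} [AddCommGroup M] [Module ℝ M]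
    (a b : ℤ) (f : ℤ → M) (ℓ : ℝ) :
    ∑ k ∈ Icc a b, ∑ s ∈ Icc a k, f s -
        (3 / (ℓ + 2)) • ∑ k ∈ Icc a b, ∑ s ∈ Icc a k, ∑ i ∈ Icc a s, f i =
      ∑ s ∈ Icc a b, (((b : ℝ) - s + 1) * firstOrthPoly ℓ ((b : ℝ) - s + 1)) • f s := by
  rw [sum_Icc_sum_Icc_eq_sum_smul, sum_Icc_sum_Icc_sum_Icc_eq_sum_smul, smul_sum,
    ← sum_sub_distrib]
  refine sum_congr rfl fun s _ => ?_
  rw [smul_smul, ← sub_smul, firstOrthPoly]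
  congr 1
  ring

namespace LinearMap.BilinForm

variable {ι M : Type*} [AddCommGroup M] [Module ℝ M] {B : LinearMap.BilinForm ℝ M}

lemma sum_mul_apply (s : Finset ι) (c : ι → ℝ) (v : ι → M) (y : M) :
    ∑ i ∈ s, c i * B (v i) y = B (∑ i ∈ s, c i • v i) y := by
  simp only [sum_left, smul_left]

theorem IsPosSemidef.refined_weighted_jensen (hB : B.IsPosSemidef) {s : Finset ι}
    {w e : ι → ℝ} (hw : ∀ i ∈ s, 0 ≤ w i) (hW : 0 < ∑ i ∈ s, w i)
    (he : ∑ i ∈ s, w i * e i = 0) (v : ι → M) {c : ℝ} (hc : 0 ≤ c)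
    (hcV : c * ∑ i ∈ s, w i * e i ^ 2 ≤ 1) :
    B (∑ i ∈ s, w i • v i) (∑ i ∈ s, w i • v i) / ∑ i ∈ s, w i +
        c * B (∑ i ∈ s, (w i * e i) • v i) (∑ i ∈ s, (w i * e i) • v i) ≤
      ∑ i ∈ s, w i * B (v i) (v i) := by
  generalize hW' : ∑ i ∈ s, w i = W at hW ⊢
  generalize hυ : ∑ i ∈ s, w i • v i = υ
  generalize hζ : ∑ i ∈ s, (w i * e i) • v i = ζ
  generalize hV : ∑ i ∈ s, w i * e i ^ 2 = V at hcV
  have expand : ∀ i, w i * B (v i - W⁻¹ • υ - (c * e i) • ζ) (v i - W⁻¹ • υ - (c * e i) • ζ) =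
      w i * B (v i) (v i) - 2 * W⁻¹ * (w i * B (v i) υ) - 2 * c * (w i * e i * B (v i) ζ) +
        W⁻¹ ^ 2 * w i * B υ υ + c ^ 2 * (w i * e i ^ 2) * B ζ ζ +
          2 * c * W⁻¹ * (w i * e i) * B υ ζ := by
    intro i
    simp only [map_sub, map_smul, LinearMap.sub_apply, LinearMap.smul_apply, smul_eq_mul,
      hB.isSymm.eq υ (v i), hB.isSymm.eq ζ (v i), hB.isSymm.eq ζ υ]
    ring
  have h0 : 0 ≤ ∑ i ∈ s, w i * B (v i - W⁻¹ • υ - (c * e i) • ζ) (v i - W⁻¹ • υ - (c * e i) • ζ) :=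
    sum_nonneg fun i hi => mul_nonneg (hw i hi) (hB.isNonneg.nonneg _)
  simp only [expand, sum_add_distrib, sum_sub_distrib, ← mul_sum, ← sum_mul, he, hW', hV,
    sum_mul_apply, hυ, hζ] at h0
  have hslack : 0 ≤ W * (c * (1 - c * V) * B ζ ζ) :=
    mul_nonneg hW.le (mul_nonneg (mul_nonneg hc (sub_nonneg.2 hcV)) (hB.isNonneg.nonneg ζ))
  field_simp at h0 ⊢
  linarith

end LinearMap.BilinForm

lemma Matrix.PosSemidef.isPosSemidef_toBilin' {m : Type*} [Fintype m] [DecidableEq m]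
    {R : Matrix m m ℝ} (hR : R.PosSemidef) : R.toBilin'.IsPosSemidef where
  isSymm := Matrix.isSymm_toBilin'_iff_isSymm.2 (isHermitian_iff_isSymm.1 hR.isHermitian)
  isNonneg := ⟨fun x => by simpa [Matrix.toBilin'_apply'] using hR.dotProduct_mulVec_nonneg x⟩

theorem refined_jensen_double_corollary_general
    (n : ℕ) (R : Matrix (Fin n) (Fin n) ℝ) (hR : R.PosDef)
    (a b : ℤ) (hab : a ≤ b) (u : ℤ → (Fin n → ℝ)) :
    ∀ (ℓ : ℝ), ℓ = (b : ℝ) - a + 1 →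
    ∀ (υ₂ υ₃ ζ₄ : Fin n → ℝ),
      υ₂ = ∑ k ∈ Finset.Icc a b, ∑ s ∈ Finset.Icc a k, u s →
      υ₃ = ∑ k ∈ Finset.Icc a b, ∑ s ∈ Finset.Icc a k, ∑ i ∈ Finset.Icc a s, u i →
      ζ₄ = υ₂ - (3 / (ℓ + 2)) • υ₃ →
      ∑ k ∈ Finset.Icc a b, ∑ s ∈ Finset.Icc a k, (u s) ⬝ᵥ R.mulVec (u s) ≥
        (2 / (ℓ * (ℓ + 1))) * ((υ₂ ⬝ᵥ R.mulVec υ₂) + 8 * (ζ₄ ⬝ᵥ R.mulVec ζ₄)) := by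
  intro ℓ hℓ υ₂ υ₃ ζ₄ h₂ h₃ h₄
  have hab' : a ≤ b + 1 := by omega
  have hℓ₁ : 1 ≤ ℓ := by
    have : (a : ℝ) ≤ b := by exact_mod_cast hab
    linarith
  have hℓpos : 0 < ℓ * (ℓ + 1) := by nlinarith
  have key := hR.posSemidef.isPosSemidef_toBilin'.refined_weighted_jensen
    (s := Icc a b) (w := fun s => (b : ℝ) - s + 1) (e := fun s => firstOrthPoly ℓ ((b : ℝ) - s + 1))
    (c := 16 / (ℓ * (ℓ + 1)))
    (fun s hs => by
      have : (s : ℝ) ≤ b := by simp only [mem_Icc] at hs; exact_mod_cast hs.2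
      linarith)
    (by rw [sum_Icc_sub_add_one hab' hℓ]; positivity)
    (sum_Icc_mul_firstOrthPoly hab' hℓ) u (by positivity)
    (by rw [sum_Icc_mul_firstOrthPoly_sq hab' hℓ]; field_simp; linarith)
  simp only [toBilin'_apply'] at key
  rw [sum_Icc_sub_add_one hab' hℓ, ← sum_Icc_sum_Icc_eq_sum_smul a b u, ← h₂,
    ← sum_Icc_sum_Icc_sub_smul_triple_eq_sum_smul a b u ℓ, ← h₂, ← h₃, ← h₄] at key
  rw [ge_iff_le, sum_Icc_sum_Icc_eq_sum_smul a b]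
  simp only [smul_eq_mul]
  convert key using 1
  field_simp
  ring

theorem refined_jensen_double_corollary
    (n : ℕ) (R : Matrix (Fin n) (Fin n) ℝ) (hR : R.PosDef) (hRsym : R.IsSymm)
    (a b : ℤ) (hab : a ≤ b) (u : ℤ → (Fin n → ℝ)) :
    ∀ (ℓ : ℝ), ℓ = (b : ℝ) - a + 1 →
    ∀ (υ₂ υ₃ ζ₄ : Fin n → ℝ),
      υ₂ = ∑ k ∈ Finset.Icc a b, ∑ s ∈ Finset.Icc a k, u s →
      υ₃ = ∑ k ∈ Finset.Icc a b, ∑ s ∈ Finset.Icc a k, ∑ i ∈ Finset.Icc a s, u i →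
      ζ₄ = υ₂ - (3 / (ℓ + 2)) • υ₃ →
      ∑ k ∈ Finset.Icc a b, ∑ s ∈ Finset.Icc a k, (u s) ⬝ᵥ R.mulVec (u s) ≥
        (2 / (ℓ * (ℓ + 1))) * ((υ₂ ⬝ᵥ R.mulVec υ₂) + 8 * (ζ₄ ⬝ᵥ R.mulVec ζ₄)) :=
  refined_jensen_double_corollary_general n R hR a b hab u
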